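/- Suppose B : ℕ → ℚ satisfies B(c) = B(c−2) + 2·B(c−4) + 2·j(d−3) + 2·(−1)^d·(δ_{2,d mod 3} − 2·δ_{1,d mod 3}) for odd c ≥ 11, where d = (c−1)/2, with B(7)=2 and B(9)=4. Then for odd c ≥ 7, B(c) = ((3d+1)·2^{d−1} − 14·(−1)^d)/27 + (2/3)·(−1)^d·(δ_{1,d mod 3} + 3·δ_{2,d mod 3}). -/

import Mathlib

def jac (c : ℕ) : ℤ := (2 ^ c - (-1 : ℤ) ^ c) / 3

/-! Both `d ↦ B (2d+1)` and the closed form satisfy the same second-order recurrence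
`x (d+2) = x (d+1) + 2 x d + (forcing term)` from `d = 3` on, with the same values at
`d = 3, 4`. For the closed form the recurrence is checked separately in each residue class of
`d` mod 3, where the `δ`-terms are constants and it becomes an identity between polynomials
in `d`, `2^d`, `(-1)^d`. -/

lemma jac_cast (n : ℕ) : (jac n : ℚ) = (2 ^ n - (-1) ^ n) / 3 := by
  have h3 : (3 : ℤ) ∣ 2 ^ n - (-1) ^ n := by
    simpa using sub_dvd_pow_sub_pow (2 : ℤ) (-1) n
  rw [jac, Int.cast_div h3 (by norm_num)]
  push_cast
  rfl

lemma eq_of_two_step_rec {α : Type*} {u v : ℕ → α} (f : ℕ → α → α → α)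
    (hu : ∀ n, u (n + 2) = f n (u n) (u (n + 1)))
    (hv : ∀ n, v (n + 2) = f n (v n) (v (n + 1)))
    (h0 : u 0 = v 0) (h1 : u 1 = v 1) : u = v := by
  funext n
  induction n using Nat.twoStepInduction with
  | zero => exact h0
  | one => exact h1
  | more n ih0 ih1 => rw [hu, hv, ih0, ih1]

noncomputable def forcing (d : ℕ) : ℚ :=
  2 * (jac (d - 3) : ℚ) + 2 * (-1 : ℚ) ^ d *
    ((if d % 3 = 2 then (1 : ℚ) else 0) - 2 * (if d % 3 = 1 then (1 : ℚ) else 0))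

noncomputable def closedForm (d : ℕ) : ℚ :=
  ((3 * (d : ℚ) + 1) * 2 ^ (d - 1) - 14 * (-1 : ℚ) ^ d) / 27
    + (2 / 3) * (-1 : ℚ) ^ d *
      ((if d % 3 = 1 then (1 : ℚ) else 0) + 3 * (if d % 3 = 2 then (1 : ℚ) else 0))

lemma closedForm_add_five (d : ℕ) :
    closedForm (d + 5) = closedForm (d + 4) + 2 * closedForm (d + 3) + forcing (d + 5) := by
  obtain h | h | h : d % 3 = 0 ∨ d % 3 = 1 ∨ d % 3 = 2 := by omega
  all_goals
    simp only [closedForm, forcing, show d + 5 - 3 = d + 2 from rfl, jac_cast,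
      Nat.add_mod d, h]
    norm_num [pow_succ]
    ring

theorem B_closed_form (B : ℕ → ℚ) (h7 : B 7 = 2) (h9 : B 9 = 4)
    (hrec : ∀ c : ℕ, Odd c → 11 ≤ c →
      B c = B (c - 2) + 2 * B (c - 4) + 2 * (jac ((c - 1) / 2 - 3) : ℚ)
        + 2 * (-1 : ℚ) ^ ((c - 1) / 2) *
          ((if (c - 1) / 2 % 3 = 2 then (1 : ℚ) else 0)
            - 2 * (if (c - 1) / 2 % 3 = 1 then (1 : ℚ) else 0))) :
    ∀ c : ℕ, Odd c → 7 ≤ c →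
      B c = ((3 * (((c - 1) / 2 : ℕ) : ℚ) + 1) * 2 ^ ((c - 1) / 2 - 1)
          - 14 * (-1 : ℚ) ^ ((c - 1) / 2)) / 27
        + (2 / 3) * (-1 : ℚ) ^ ((c - 1) / 2) *
          ((if (c - 1) / 2 % 3 = 1 then (1 : ℚ) else 0)
            + 3 * (if (c - 1) / 2 % 3 = 2 then (1 : ℚ) else 0)) := by
  have hB : (fun n ↦ B (2 * n + 7)) = fun n ↦ closedForm (n + 3) := by
    refine eq_of_two_step_rec (fun n x y ↦ y + 2 * x + forcing (n + 5))
      (fun n ↦ ?_) (fun n ↦ closedForm_add_five n) ?_ ?_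
    · have hc := hrec (2 * n + 11) ⟨n + 5, by ring⟩ (by omega)
      rw [show (2 * n + 11 - 1) / 2 = n + 5 by omega,
        show 2 * n + 11 - 2 = 2 * (n + 1) + 7 by omega, show 2 * n + 11 - 4 = 2 * n + 7 by omega,
        add_assoc _ (2 * (jac _ : ℚ))] at hc
      rw [show 2 * (n + 2) + 7 = 2 * n + 11 by ring, hc, forcing]
    · norm_num [h7, closedForm]
    · norm_num [h9, closedForm]
  rintro c ⟨k, rfl⟩ hk
  obtain ⟨n, rfl⟩ : ∃ n, k = n + 3 := ⟨k - 3, by omega⟩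
  rw [show 2 * (n + 3) + 1 = 2 * n + 7 by ring, show (2 * n + 7 - 1) / 2 = n + 3 by omega]
  exact congrFun hB n
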